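/- arXiv:1809.05824 — 4 statements merged into one kernel-verified Lean document; each statement's English description precedes it below -/
import Mathlib

section
/- Consider the Smorodinsky–Winternitz Hamiltonian H = p1^2 + p2^2 + a(q1^2+q2^2) + b1/q1^2 + b2/q2^2. Then the function G = (q1 p2 - q2 p1)^2 + b1 q2^2/q1^2 + b2 q1^2/q2^2 Poisson commutes with H on the set q1 ≠ 0, q2 ≠ 0. -/
/-!
With `L = q1 p2 - q2 p1`, `r² = q1² + q2²` and `W = r² (b1 / q1² + b2 / q2²)`, which depends only
on the polar angle `θ`, the Hamiltonian reads `H = p_r² + a r² + (L² + W(θ)) / r²` and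
`G = L² + W(θ) - b1 - b2`. So `H` separates in polar coordinates and `G` is, up to a constant,
the separation constant of the angular equation. In Cartesian coordinates the vanishing of the
bracket is an identity of rational functions with denominators powers of `q1` and `q2`.
-/

/-- Canonical Poisson bracket on R^4 with coordinates (q1, q2, p1, p2):
{F,G} = sum_i (dF/dq_i dG/dp_i - dF/dp_i dG/dq_i). -/
noncomputable def pb (F G : ℝ → ℝ → ℝ → ℝ → ℝ) (q1 q2 p1 p2 : ℝ) : ℝ :=
  deriv (fun x => F x q2 p1 p2) q1 * deriv (fun x => G q1 q2 x p2) p1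
  - deriv (fun x => F q1 q2 x p2) p1 * deriv (fun x => G x q2 p1 p2) q1
  + deriv (fun x => F q1 x p1 p2) q2 * deriv (fun x => G q1 q2 p1 x) p2
  - deriv (fun x => F q1 q2 p1 x) p2 * deriv (fun x => G q1 x p1 p2) q2

theorem pb_eq_of_hasDerivAt {F G : ℝ → ℝ → ℝ → ℝ → ℝ} {q1 q2 p1 p2 : ℝ}
    {Fq1 Fq2 Fp1 Fp2 Gq1 Gq2 Gp1 Gp2 : ℝ}
    (hFq1 : HasDerivAt (fun x => F x q2 p1 p2) Fq1 q1)
    (hFq2 : HasDerivAt (fun x => F q1 x p1 p2) Fq2 q2)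
    (hFp1 : HasDerivAt (fun x => F q1 q2 x p2) Fp1 p1)
    (hFp2 : HasDerivAt (fun x => F q1 q2 p1 x) Fp2 p2)
    (hGq1 : HasDerivAt (fun x => G x q2 p1 p2) Gq1 q1)
    (hGq2 : HasDerivAt (fun x => G q1 x p1 p2) Gq2 q2)
    (hGp1 : HasDerivAt (fun x => G q1 q2 x p2) Gp1 p1)
    (hGp2 : HasDerivAt (fun x => G q1 q2 p1 x) Gp2 p2) :
    pb F G q1 q2 p1 p2 = Fq1 * Gp1 - Fp1 * Gq1 + Fq2 * Gp2 - Fp2 * Gq2 := by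
  rw [pb, hFq1.deriv, hFq2.deriv, hFp1.deriv, hFp2.deriv, hGq1.deriv, hGq2.deriv, hGp1.deriv,
    hGp2.deriv]

theorem hasDerivAt_const_div_sq (c : ℝ) {x : ℝ} (hx : x ≠ 0) :
    HasDerivAt (fun y => c / y ^ 2) (-2 * c / x ^ 3) x := by
  refine ((hasDerivAt_const x c).div (hasDerivAt_pow 2 x) (pow_ne_zero 2 hx)).congr_deriv ?_
  field_simp
  ring

namespace SmorodinskyWinternitz

variable (a b1 b2 : ℝ) {q1 q2 p1 p2 : ℝ}

noncomputable def hamiltonian (q1 q2 p1 p2 : ℝ) : ℝ :=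
  p1 ^ 2 + p2 ^ 2 + a * (q1 ^ 2 + q2 ^ 2) + b1 / q1 ^ 2 + b2 / q2 ^ 2

noncomputable def polarIntegral (q1 q2 p1 p2 : ℝ) : ℝ :=
  (q1 * p2 - q2 * p1) ^ 2 + b1 * q2 ^ 2 / q1 ^ 2 + b2 * q1 ^ 2 / q2 ^ 2

theorem hasDerivAt_hamiltonian_q1 (h1 : q1 ≠ 0) :
    HasDerivAt (fun x => hamiltonian a b1 b2 x q2 p1 p2) (2 * a * q1 - 2 * b1 / q1 ^ 3) q1 :=
  (((hasDerivAt_const q1 (p1 ^ 2 + p2 ^ 2)).add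
    (((hasDerivAt_pow 2 q1).add_const (q2 ^ 2)).const_mul a)).add
    (hasDerivAt_const_div_sq b1 h1)).add_const (b2 / q2 ^ 2) |>.congr_deriv (by ring)

theorem hasDerivAt_hamiltonian_q2 (h2 : q2 ≠ 0) :
    HasDerivAt (fun x => hamiltonian a b1 b2 q1 x p1 p2) (2 * a * q2 - 2 * b2 / q2 ^ 3) q2 :=
  (((hasDerivAt_const q2 (p1 ^ 2 + p2 ^ 2)).add
    (((hasDerivAt_pow 2 q2).const_add (q1 ^ 2)).const_mul a)).add_const (b1 / q1 ^ 2)).add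
    (hasDerivAt_const_div_sq b2 h2) |>.congr_deriv (by ring)

theorem hasDerivAt_hamiltonian_p1 :
    HasDerivAt (fun x => hamiltonian a b1 b2 q1 q2 x p2) (2 * p1) p1 :=
  ((((hasDerivAt_pow 2 p1).add_const (p2 ^ 2)).add_const (a * (q1 ^ 2 + q2 ^ 2))).add_const
    (b1 / q1 ^ 2)).add_const (b2 / q2 ^ 2) |>.congr_deriv (by ring)

theorem hasDerivAt_hamiltonian_p2 :
    HasDerivAt (fun x => hamiltonian a b1 b2 q1 q2 p1 x) (2 * p2) p2 :=
  ((((hasDerivAt_pow 2 p2).const_add (p1 ^ 2)).add_const (a * (q1 ^ 2 + q2 ^ 2))).add_const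
    (b1 / q1 ^ 2)).add_const (b2 / q2 ^ 2) |>.congr_deriv (by ring)

theorem hasDerivAt_polarIntegral_q1 (h1 : q1 ≠ 0) :
    HasDerivAt (fun x => polarIntegral b1 b2 x q2 p1 p2)
      (2 * (q1 * p2 - q2 * p1) * p2 - 2 * b1 * q2 ^ 2 / q1 ^ 3 + 2 * b2 * q1 / q2 ^ 2) q1 :=
  (((((hasDerivAt_id' q1).mul_const p2).sub_const (q2 * p1)).pow 2).add
    (hasDerivAt_const_div_sq (b1 * q2 ^ 2) h1)).add
    (((hasDerivAt_pow 2 q1).const_mul b2).div_const (q2 ^ 2)) |>.congr_deriv (by ring)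

theorem hasDerivAt_polarIntegral_q2 (h2 : q2 ≠ 0) :
    HasDerivAt (fun x => polarIntegral b1 b2 q1 x p1 p2)
      (-2 * (q1 * p2 - q2 * p1) * p1 + 2 * b1 * q2 / q1 ^ 2 - 2 * b2 * q1 ^ 2 / q2 ^ 3) q2 :=
  (((((hasDerivAt_id' q2).mul_const p1).const_sub (q1 * p2)).pow 2).add
    (((hasDerivAt_pow 2 q2).const_mul b1).div_const (q1 ^ 2))).add
    (hasDerivAt_const_div_sq (b2 * q1 ^ 2) h2) |>.congr_deriv (by ring)

theorem hasDerivAt_polarIntegral_p1 :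
    HasDerivAt (fun x => polarIntegral b1 b2 q1 q2 x p2) (-2 * (q1 * p2 - q2 * p1) * q2) p1 :=
  (((((hasDerivAt_id' p1).const_mul q2).const_sub (q1 * p2)).pow 2).add_const
    (b1 * q2 ^ 2 / q1 ^ 2)).add_const (b2 * q1 ^ 2 / q2 ^ 2) |>.congr_deriv (by ring)

theorem hasDerivAt_polarIntegral_p2 :
    HasDerivAt (fun x => polarIntegral b1 b2 q1 q2 p1 x) (2 * (q1 * p2 - q2 * p1) * q1) p2 :=
  (((((hasDerivAt_id' p2).const_mul q1).sub_const (q2 * p1)).pow 2).add_const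
    (b1 * q2 ^ 2 / q1 ^ 2)).add_const (b2 * q1 ^ 2 / q2 ^ 2) |>.congr_deriv (by ring)

theorem pb_hamiltonian_polarIntegral (h1 : q1 ≠ 0) (h2 : q2 ≠ 0) :
    pb (hamiltonian a b1 b2) (polarIntegral b1 b2) q1 q2 p1 p2 = 0 := by
  rw [pb_eq_of_hasDerivAt (hasDerivAt_hamiltonian_q1 a b1 b2 h1)
    (hasDerivAt_hamiltonian_q2 a b1 b2 h2) (hasDerivAt_hamiltonian_p1 a b1 b2)
    (hasDerivAt_hamiltonian_p2 a b1 b2) (hasDerivAt_polarIntegral_q1 b1 b2 h1)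
    (hasDerivAt_polarIntegral_q2 b1 b2 h2) (hasDerivAt_polarIntegral_p1 b1 b2)
    (hasDerivAt_polarIntegral_p2 b1 b2)]
  field_simp
  ring

end SmorodinskyWinternitz

/-- The polar-separation integral G = (q1 p2 - q2 p1)^2 + b1 q2^2/q1^2 + b2 q1^2/q2^2
Poisson commutes with the Smorodinsky-Winternitz Hamiltonian
H = p1^2 + p2^2 + a(q1^2+q2^2) + b1/q1^2 + b2/q2^2 on the set q1 ≠ 0, q2 ≠ 0. -/
theorem SW_polar_integral (a b1 b2 : ℝ) (q1 q2 p1 p2 : ℝ) (h1 : q1 ≠ 0) (h2 : q2 ≠ 0) :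
    pb (fun q1 q2 p1 p2 =>
         p1 ^ 2 + p2 ^ 2 + a * (q1 ^ 2 + q2 ^ 2) + b1 / q1 ^ 2 + b2 / q2 ^ 2)
       (fun q1 q2 p1 p2 =>
         (q1 * p2 - q2 * p1) ^ 2 + b1 * q2 ^ 2 / q1 ^ 2 + b2 * q1 ^ 2 / q2 ^ 2)
       q1 q2 p1 p2 = 0 :=
  SmorodinskyWinternitz.pb_hamiltonian_polarIntegral a b1 b2 h1 h2
end

section
/- Let S be an invertible real n×n matrix-valued function with the Stäckel property: the j-th column of S depends only on the variable u_j, i.e. S_{ij} = S_{ij}(u_j), and let V_j = V_j(u_j) be smooth functions. Define I_i(u, p_u) = Σ_{j=1}^n (S^{-1})_{ji} (p_{u_j}^2 + V_j(u_j)) for i = 1,...,n. Then the functions I_1, ..., I_n are pairwise in involution with respect to the canonical Poisson bracket: {I_i, I_k} = 0 for all i, k. -/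
private lemma diffAt_det_comp {n : ℕ} {M : ℝ → Matrix (Fin n) (Fin n) ℝ} {t₀ : ℝ}
    (h : ∀ a b, DifferentiableAt ℝ (fun t => M t a b) t₀) :
    DifferentiableAt ℝ (fun t => (M t).det) t₀ := by
  simp only [Matrix.det_apply']
  apply DifferentiableAt.fun_sum
  intro σ _
  exact (DifferentiableAt.fun_finsetProd (fun i _ => h (σ i) i)).const_mul _

private lemma diffAt_adjugate_comp {n : ℕ} {M : ℝ → Matrix (Fin n) (Fin n) ℝ} {t₀ : ℝ}
    (h : ∀ a b, DifferentiableAt ℝ (fun t => M t a b) t₀) (m i : Fin n) :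
    DifferentiableAt ℝ (fun t => (M t).adjugate m i) t₀ := by
  simp only [Matrix.adjugate_apply]
  apply diffAt_det_comp
  intro a b
  rcases eq_or_ne a i with rfl | ha
  · simp only [Matrix.updateRow_self]
    exact differentiableAt_const _
  · simp only [Matrix.updateRow_ne ha]
    exact h a b

private lemma diffAt_inv_entry {n : ℕ} {M : ℝ → Matrix (Fin n) (Fin n) ℝ} {t₀ : ℝ}
    (h : ∀ a b, DifferentiableAt ℝ (fun t => M t a b) t₀)
    (hdet : (M t₀).det ≠ 0) (m i : Fin n) :
    DifferentiableAt ℝ (fun t => (M t)⁻¹ m i) t₀ := by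
  have heq : (fun t => (M t)⁻¹ m i) = fun t => ((M t).det)⁻¹ * (M t).adjugate m i := by
    funext t
    rw [Matrix.inv_def, Matrix.smul_apply, Ring.inverse_eq_inv, smul_eq_mul]
  rw [heq]
  exact ((diffAt_det_comp h).inv hdet).mul (diffAt_adjugate_comp h m i)

/-- Canonical Poisson bracket on R^{2n} with coordinates (u, p_u):
{F,G} = sum_j (dF/du_j dG/dp_j - dF/dp_j dG/du_j). -/
noncomputable def pbN {n : ℕ} (F G : (Fin n → ℝ) × (Fin n → ℝ) → ℝ)
    (x : (Fin n → ℝ) × (Fin n → ℝ)) : ℝ :=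
  ∑ j : Fin n,
    (deriv (fun t => F (Function.update x.1 j t, x.2)) (x.1 j) *
       deriv (fun t => G (x.1, Function.update x.2 j t)) (x.2 j)
     - deriv (fun t => F (x.1, Function.update x.2 j t)) (x.2 j) *
       deriv (fun t => G (Function.update x.1 j t, x.2)) (x.1 j))

/-- Stackel's theorem: if S is a Stackel matrix (the j-th column S_{ij} = S_{ij}(u_j)
depends only on u_j), invertible at every point, and V_j = V_j(u_j) are smooth,
then the integrals I_i(u,p) = sum_j (S^{-1})_{ji} (p_j^2 + V_j(u_j)) are pairwise
in involution with respect to the canonical Poisson bracket. -/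
theorem stackel_involutivity (n : ℕ)
    (S : Fin n → Fin n → ℝ → ℝ) (V : Fin n → ℝ → ℝ)
    (hS : ∀ i j, ContDiff ℝ (⊤ : ℕ∞) (S i j)) (hV : ∀ j, ContDiff ℝ (⊤ : ℕ∞) (V j))
    (hinv : ∀ u : Fin n → ℝ, IsUnit (Matrix.of (fun i j => S i j (u j))).det)
    (I : Fin n → (Fin n → ℝ) × (Fin n → ℝ) → ℝ)
    (hI : ∀ i x, I i x =
      ∑ j : Fin n, (Matrix.of (fun i j => S i j (x.1 j)))⁻¹ j i *
        (x.2 j ^ 2 + V j (x.1 j))) :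
    ∀ i k : Fin n, ∀ x, pbN (I i) (I k) x = 0 := by
  intro i k x
  unfold pbN
  apply Finset.sum_eq_zero
  intro j _
  set u : Fin n → ℝ := x.1 with hu
  set p : Fin n → ℝ := x.2 with hp
  set t₀ : ℝ := u j with ht₀
  set f : ℝ → Matrix (Fin n) (Fin n) ℝ :=
    fun t => Matrix.of (fun a b => S a b (Function.update u j t b)) with hf
  have hupd : Function.update u j t₀ = u := by
    rw [ht₀]; exact Function.update_eq_self j u
  have hf0 : f t₀ = Matrix.of (fun a b => S a b (u b)) := by
    rw [hf]; simp only [hupd]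
  set A : Matrix (Fin n) (Fin n) ℝ := f t₀ with hA
  set T : Matrix (Fin n) (Fin n) ℝ := A⁻¹ with hT
  have hunit : ∀ t, IsUnit (f t).det := fun t => hinv (Function.update u j t)
  have hunit0 : IsUnit A.det := by rw [hA]; exact hunit t₀
  have hdet0 : A.det ≠ 0 := hunit0.ne_zero
  -- entrywise derivative of f
  have hf_entry : ∀ a b, HasDerivAt (fun t => f t a b)
      (if b = j then deriv (S a j) t₀ else 0) t₀ := by
    intro a b
    rcases eq_or_ne b j with rfl | hb
    · simp only [if_pos rfl, hf, Matrix.of_apply, Function.update_self]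
      exact ((hS a b).differentiable (by simp) t₀).hasDerivAt
    · simp only [if_neg hb, hf, Matrix.of_apply, Function.update_of_ne hb]
      exact hasDerivAt_const _ _
  have hTdiff : ∀ m c, DifferentiableAt ℝ (fun t => (f t)⁻¹ m c) t₀ :=
    fun m c => diffAt_inv_entry (fun a b => (hf_entry a b).differentiableAt) hdet0 m c
  set D : Matrix (Fin n) (Fin n) ℝ :=
    Matrix.of (fun m c => deriv (fun t => (f t)⁻¹ m c) t₀) with hDdef
  have hD : ∀ m c, HasDerivAt (fun t => (f t)⁻¹ m c) (D m c) t₀ :=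
    fun m c => (hTdiff m c).hasDerivAt
  set B : Matrix (Fin n) (Fin n) ℝ :=
    Matrix.of (fun a b => if b = j then deriv (S a j) t₀ else 0) with hB
  -- product rule applied to (f t)⁻¹ * f t = 1 gives D * A = -(T * B)
  have hDA : D * A = -(T * B) := by
    ext m b
    have h1 : HasDerivAt (fun t => ∑ a, (f t)⁻¹ m a * f t a b)
        (∑ a, (D m a * A a b + T m a * B a b)) t₀ := by
      apply HasDerivAt.fun_sum
      intro a _
      exact (hD m a).mul (hf_entry a b)
    have h2 : (fun t => ∑ a, (f t)⁻¹ m a * f t a b)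
        = fun _ => (1 : Matrix (Fin n) (Fin n) ℝ) m b := by
      funext t
      rw [← Matrix.mul_apply, Matrix.nonsing_inv_mul (f t) (hunit t)]
    have h3 : HasDerivAt (fun t => ∑ a, (f t)⁻¹ m a * f t a b) 0 t₀ := by
      rw [h2]; exact hasDerivAt_const _ _
    have h4 := h1.unique h3
    rw [Finset.sum_add_distrib] at h4
    simp only [Matrix.mul_apply, Matrix.neg_apply]
    linarith [h4]
  have hDformula : D = -(T * B * T) := by
    have hAT : A * T = 1 := Matrix.mul_nonsing_inv A hunit0
    calc D = D * (A * T) := by rw [hAT, mul_one]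
    _ = D * A * T := by rw [Matrix.mul_assoc]
    _ = -(T * B) * T := by rw [hDA]
    _ = -(T * B * T) := by rw [neg_mul]
  set cvec : Fin n → ℝ := fun m => ∑ a, T m a * deriv (S a j) t₀ with hcvec
  have hDmi : ∀ m cc, D m cc = -(T j cc * cvec m) := by
    intro m cc
    have hterm : ∀ b : Fin n, (∑ a, T m a * B a b) * T b cc
        = if b = j then T j cc * cvec m else 0 := by
      intro b
      rcases eq_or_ne b j with rfl | hb
      · simp only [if_pos rfl, hB, Matrix.of_apply, eq_self_iff_true, if_true, hcvec]
        ring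
      · simp [hB, if_neg hb]
    rw [hDformula]
    simp only [Matrix.neg_apply, Matrix.mul_apply]
    rw [Finset.sum_congr rfl (fun b _ => hterm b), Finset.sum_ite_eq' Finset.univ j]
    simp
  set W : ℝ := deriv (V j) t₀ - ∑ m, cvec m * (p m ^ 2 + V m (u m)) with hW
  -- the u_j-derivative
  have hU : ∀ ii : Fin n, HasDerivAt (fun t => I ii (Function.update u j t, p))
      (T j ii * W) t₀ := by
    intro ii
    have hIu : (fun t => I ii (Function.update u j t, p))
        = fun t => ∑ m, (f t)⁻¹ m ii * (p m ^ 2 + V m (Function.update u j t m)) := by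
      funext t
      rw [hI]
    rw [hIu]
    have hsum : HasDerivAt
        (fun t => ∑ m, (f t)⁻¹ m ii * (p m ^ 2 + V m (Function.update u j t m)))
        (∑ m, (D m ii * (p m ^ 2 + V m (u m))
          + T m ii * (if m = j then deriv (V j) t₀ else 0))) t₀ := by
      apply HasDerivAt.fun_sum
      intro m _
      have h2 : HasDerivAt (fun t => p m ^ 2 + V m (Function.update u j t m))
          (if m = j then deriv (V j) t₀ else 0) t₀ := by
        rcases eq_or_ne m j with rfl | hm
        · simp only [if_pos rfl, Function.update_self]
          exact ((hV m).differentiable (by simp) t₀).hasDerivAt.const_add _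
        · simp only [if_neg hm, Function.update_of_ne hm]
          exact hasDerivAt_const _ _
      have := (hD m ii).fun_mul h2
      simpa [hupd, hT, hA] using this
    have hval : (∑ m, (D m ii * (p m ^ 2 + V m (u m))
        + T m ii * (if m = j then deriv (V j) t₀ else 0))) = T j ii * W := by
      rw [Finset.sum_add_distrib]
      have h1 : ∑ m, D m ii * (p m ^ 2 + V m (u m))
          = -(T j ii * ∑ m, cvec m * (p m ^ 2 + V m (u m))) := by
        calc ∑ m, D m ii * (p m ^ 2 + V m (u m))
            = ∑ m, -(T j ii * (cvec m * (p m ^ 2 + V m (u m)))) :=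
              Finset.sum_congr rfl (fun m _ => by rw [hDmi]; ring)
          _ = -(∑ m, T j ii * (cvec m * (p m ^ 2 + V m (u m)))) := by
              rw [Finset.sum_neg_distrib]
          _ = -(T j ii * ∑ m, cvec m * (p m ^ 2 + V m (u m))) := by
              rw [Finset.mul_sum]
      have h2 : ∑ m, T m ii * (if m = j then deriv (V j) t₀ else 0)
          = T j ii * deriv (V j) t₀ := by
        simp [mul_ite, mul_zero, Finset.sum_ite_eq', Finset.mem_univ]
      rw [h1, h2, hW]; ring
    rw [← hval]
    exact hsum
  -- the p_j-derivative
  have hP : ∀ ii : Fin n, HasDerivAt (fun t => I ii (u, Function.update p j t))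
      (T j ii * (2 * p j)) (p j) := by
    intro ii
    have hIp : (fun t => I ii (u, Function.update p j t))
        = fun t => ∑ m, T m ii * ((Function.update p j t m) ^ 2 + V m (u m)) := by
      funext t
      simp only [hI, hT, hf0]
    rw [hIp]
    have hsum : HasDerivAt
        (fun t => ∑ m, T m ii * ((Function.update p j t m) ^ 2 + V m (u m)))
        (∑ m, (if m = j then T j ii * (2 * p j) else 0)) (p j) := by
      apply HasDerivAt.fun_sum
      intro m _
      rcases eq_or_ne m j with rfl | hm
      · simp only [if_pos rfl, Function.update_self]
        have hsq : HasDerivAt (fun t : ℝ => t ^ 2 + V m (u m)) (2 * p m) (p m) := by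
          simpa using (hasDerivAt_pow 2 (p m)).add_const (V m (u m))
        exact HasDerivAt.const_mul (T m ii) hsq
      · simp only [if_neg hm, Function.update_of_ne hm]
        exact hasDerivAt_const _ _
    have hval : (∑ m, (if m = j then T j ii * (2 * p j) else 0))
        = T j ii * (2 * p j) := by
      simp [Finset.sum_ite_eq', Finset.mem_univ]
    rw [← hval]
    exact hsum
  rw [(hU i).deriv, (hU k).deriv, (hP i).deriv, (hP k).deriv]
  ring
end

section
/- Let H = p_r^2 + p_φ^2/r^2 + a r^2 + b1/(r^2 sin^2(kφ)) + b2/(r^2 cos^2(kφ)) on the open set r > 0, sin(kφ) ≠ 0, cos(kφ) ≠ 0, where k is a positive integer and a, b1, b2 are real. Then the function G = p_φ^2 + b1/sin^2(kφ) + b2/cos^2(kφ) Poisson commutes with H. -/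
theorem pb_separated_eq_zero (A B : ℝ → ℝ → ℝ) (G : ℝ → ℝ → ℝ) (q1 q2 p1 p2 : ℝ) :
    pb (fun q1 q2 p1 p2 => A q1 p1 + B q1 p1 * G q2 p2) (fun _ q2 _ p2 => G q2 p2)
      q1 q2 p1 p2 = 0 := by
  simp only [pb, deriv_const, deriv_const_add, deriv_const_mul_field]
  ring

theorem SW_deformed_polar_integral_general (k : ℕ) (a b1 b2 : ℝ)
    (r φ pr pφ : ℝ) :
    pb (fun r φ pr pφ =>
          pr ^ 2 + pφ ^ 2 / r ^ 2 + a * r ^ 2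
            + b1 / (r ^ 2 * Real.sin (k * φ) ^ 2)
            + b2 / (r ^ 2 * Real.cos (k * φ) ^ 2))
       (fun _ φ _ pφ =>
          pφ ^ 2 + b1 / Real.sin (k * φ) ^ 2 + b2 / Real.cos (k * φ) ^ 2)
       r φ pr pφ = 0 := by
  have hH : (fun r φ pr pφ : ℝ =>
        pr ^ 2 + pφ ^ 2 / r ^ 2 + a * r ^ 2
          + b1 / (r ^ 2 * Real.sin (k * φ) ^ 2)
          + b2 / (r ^ 2 * Real.cos (k * φ) ^ 2))
      = fun r φ pr pφ => (pr ^ 2 + a * r ^ 2)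
          + (r ^ 2)⁻¹ * (pφ ^ 2 + b1 / Real.sin (k * φ) ^ 2 + b2 / Real.cos (k * φ) ^ 2) := by
    funext r φ pr pφ
    simp only [div_eq_mul_inv, mul_inv]
    ring
  rw [hH]
  exact pb_separated_eq_zero (fun r pr => pr ^ 2 + a * r ^ 2) (fun r _ => (r ^ 2)⁻¹)
    (fun φ pφ => pφ ^ 2 + b1 / Real.sin (k * φ) ^ 2 + b2 / Real.cos (k * φ) ^ 2) r φ pr pφ

/-- For the k-deformed Smorodinsky-Winternitz Hamiltonian in polar coordinates
H = p_r^2 + p_phi^2/r^2 + a r^2 + b1/(r^2 sin^2(k phi)) + b2/(r^2 cos^2(k phi)),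
the angular integral G = p_phi^2 + b1/sin^2(k phi) + b2/cos^2(k phi) Poisson
commutes with H on the open set r > 0, sin(k phi) ≠ 0, cos(k phi) ≠ 0.
Coordinates of pb are (r, phi, p_r, p_phi). -/
theorem SW_deformed_polar_integral (k : ℕ) (hk : 0 < k) (a b1 b2 : ℝ)
    (r φ pr pφ : ℝ) (hr : 0 < r)
    (hs : Real.sin (k * φ) ≠ 0) (hc : Real.cos (k * φ) ≠ 0) :
    pb (fun r φ pr pφ =>
          pr ^ 2 + pφ ^ 2 / r ^ 2 + a * r ^ 2
            + b1 / (r ^ 2 * Real.sin (k * φ) ^ 2)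
            + b2 / (r ^ 2 * Real.cos (k * φ) ^ 2))
       (fun _ φ _ pφ =>
          pφ ^ 2 + b1 / Real.sin (k * φ) ^ 2 + b2 / Real.cos (k * φ) ^ 2)
       r φ pr pφ = 0 :=
  SW_deformed_polar_integral_general k a b1 b2 r φ pr pφ
end

section
/- Let H = (p1^2 + p2^2)/(u1^2 + u2^2) + (V(u1) + V(u2))/(u1^2 + u2^2) with V(u) = a u^2 + b u + c, on the open set u1^2 + u2^2 ≠ 0. Then the Stäckel integral I2 = (u2^2(p1^2 + V(u1)) - u1^2(p2^2 + V(u2)))/(u1^2 + u2^2) Poisson commutes with H: {H, I2} = 0. -/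
/-!
On the plane `(u₁, p₁)`, with `u₂, p₂` frozen, the Stäckel integral is an affine function of the
Hamiltonian: `I₂ = f₂(u₂) H - F₂(u₂, p₂)`, where `F_j = p_j ^ 2 + V(u_j)` and `f_j(u_j) = u_j ^ 2`
come from the separation relations `F₁ = f₁ H + I₂`, `F₂ = f₂ H - I₂`. Symmetrically
`I₂ = F₁(u₁, p₁) - f₁(u₁) H` on the plane `(u₂, p₂)`. Each degree of freedom contributes to `{H, I₂}`
the Jacobian determinant of `H` and an affine function of `H`, which vanishes.
-/

open Filter Topology

theorem deriv_mul_deriv_sub_eq_zero_of_eventually_eq_affine {h i : ℝ → ℝ → ℝ} {x p k m : ℝ}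
    (hi : ∀ᶠ z in 𝓝 (x, p), i z.1 z.2 = k * h z.1 z.2 + m) :
    deriv (fun x' => h x' p) x * deriv (fun p' => i x p') p
      - deriv (fun p' => h x p') p * deriv (fun x' => i x' p) x = 0 := by
  have hx : (fun x' => i x' p) =ᶠ[𝓝 x] fun x' => k * h x' p + m :=
    ((Continuous.prodMk_left p).tendsto x).eventually hi
  have hp : (fun p' => i x p') =ᶠ[𝓝 p] fun p' => k * h x p' + m :=
    ((Continuous.prodMk_right x).tendsto p).eventually hi
  rw [hx.deriv_eq, hp.deriv_eq, deriv_add_const, deriv_add_const, deriv_const_mul_field,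
    deriv_const_mul_field]
  ring

theorem pb_eq_zero_of_eventually_eq_affine {F G : ℝ → ℝ → ℝ → ℝ → ℝ}
    {q1 q2 p1 p2 k₁ m₁ k₂ m₂ : ℝ}
    (h₁ : ∀ᶠ z in 𝓝 (q1, p1), G z.1 q2 z.2 p2 = k₁ * F z.1 q2 z.2 p2 + m₁)
    (h₂ : ∀ᶠ z in 𝓝 (q2, p2), G q1 z.1 p1 z.2 = k₂ * F q1 z.1 p1 z.2 + m₂) :
    pb F G q1 q2 p1 p2 = 0 := by
  have hdof₁ := deriv_mul_deriv_sub_eq_zero_of_eventually_eq_affine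
    (h := fun x y => F x q2 y p2) (i := fun x y => G x q2 y p2) h₁
  have hdof₂ := deriv_mul_deriv_sub_eq_zero_of_eventually_eq_affine
    (h := fun x y => F q1 x p1 y) (i := fun x y => G q1 x p1 y) h₂
  rw [pb]
  linear_combination hdof₁ + hdof₂

theorem pb_liouville_eq_zero {f₁ f₂ : ℝ → ℝ} {F₁ F₂ : ℝ → ℝ → ℝ} {u1 u2 p1 p2 : ℝ}
    (hf₁ : ContinuousAt f₁ u1) (hf₂ : ContinuousAt f₂ u2) (h : f₁ u1 + f₂ u2 ≠ 0) :
    pb (fun u1 u2 p1 p2 => (F₁ u1 p1 + F₂ u2 p2) / (f₁ u1 + f₂ u2))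
      (fun u1 u2 p1 p2 => (f₂ u2 * F₁ u1 p1 - f₁ u1 * F₂ u2 p2) / (f₁ u1 + f₂ u2))
      u1 u2 p1 p2 = 0 := by
  refine pb_eq_zero_of_eventually_eq_affine (k₁ := f₂ u2) (m₁ := -F₂ u2 p2)
    (k₂ := -f₁ u1) (m₂ := F₁ u1 p1) ?_ ?_
  · have : ∀ᶠ z : ℝ × ℝ in 𝓝 (u1, p1), f₁ z.1 + f₂ u2 ≠ 0 :=
      ((hf₁.comp continuousAt_fst).add continuousAt_const).eventually_ne h
    filter_upwards [this] with z hz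
    field_simp
    ring
  · have : ∀ᶠ z : ℝ × ℝ in 𝓝 (u2, p2), f₁ u1 + f₂ z.1 ≠ 0 :=
      (continuousAt_const.add (hf₂.comp continuousAt_fst)).eventually_ne h
    filter_upwards [this] with z hz
    field_simp
    ring

/-- Parabolic separation: with V(u) = a u^2 + b u + c, the Stackel integral
I2 = (u2^2(p1^2+V(u1)) - u1^2(p2^2+V(u2)))/(u1^2+u2^2) Poisson commutes with
H = (p1^2+p2^2)/(u1^2+u2^2) + (V(u1)+V(u2))/(u1^2+u2^2) where u1^2+u2^2 ≠ 0. -/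
theorem parabolic_stackel_commutes (a b c : ℝ) (u1 u2 p1 p2 : ℝ)
    (h : u1 ^ 2 + u2 ^ 2 ≠ 0) :
    pb (fun u1 u2 p1 p2 =>
          (p1 ^ 2 + p2 ^ 2) / (u1 ^ 2 + u2 ^ 2)
          + ((a * u1 ^ 2 + b * u1 + c) + (a * u2 ^ 2 + b * u2 + c)) / (u1 ^ 2 + u2 ^ 2))
       (fun u1 u2 p1 p2 =>
          (u2 ^ 2 * (p1 ^ 2 + (a * u1 ^ 2 + b * u1 + c))
           - u1 ^ 2 * (p2 ^ 2 + (a * u2 ^ 2 + b * u2 + c))) / (u1 ^ 2 + u2 ^ 2))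
       u1 u2 p1 p2 = 0 := by
  have hH : (fun u1 u2 p1 p2 : ℝ =>
        (p1 ^ 2 + p2 ^ 2) / (u1 ^ 2 + u2 ^ 2)
        + ((a * u1 ^ 2 + b * u1 + c) + (a * u2 ^ 2 + b * u2 + c)) / (u1 ^ 2 + u2 ^ 2))
      = fun u1 u2 p1 p2 =>
        ((p1 ^ 2 + (a * u1 ^ 2 + b * u1 + c)) + (p2 ^ 2 + (a * u2 ^ 2 + b * u2 + c)))
          / (u1 ^ 2 + u2 ^ 2) := by
    funext u1 u2 p1 p2
    ring
  rw [hH]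
  exact pb_liouville_eq_zero (f₁ := (· ^ 2)) (f₂ := (· ^ 2))
    (F₁ := fun u p => p ^ 2 + (a * u ^ 2 + b * u + c))
    (F₂ := fun u p => p ^ 2 + (a * u ^ 2 + b * u + c))
    (continuous_pow 2).continuousAt (continuous_pow 2).continuousAt h
end
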